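/- Consider the signed network coordination game on a network (V, W) with external field h and a partition V = R ∪ S (R, S disjoint) with W_ij ≥ 0 for all i, j ∈ R. Let h^+, h^− ∈ ℝ^R be defined by h^+_i = h_i + w_i^S and h^−_i = h_i − w_i^S for i ∈ R. Assume the subnetwork (R, W_{RR}) is (h^−, h^+)-indecomposable and w_i^R − |h_i| > w_i^S for every i ∈ R. If for each a ∈ {−1, +1} there exists a nonempty subset N̄_S^(a𝟏) ⊆ N_S^(a𝟏) that is globally BR-stable for the S-restricted game with the strategy profile of players in R frozen to a𝟏, then there exists a nonempty globally BR-stable set N̄ of strategy profiles of the SNC game with N̄ ⊆ { x* ∈ N : x*_R is a constant profile }. -/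
import Mathlib


open Finset Function

noncomputable section

/-- The binary action set `A = {−1, +1}`, as a subtype of `ℝ`. -/
abbrev Act : Type := {r : ℝ // r = 1 ∨ r = -1}

def onePt : Act := ⟨1, Or.inl rfl⟩

def negOnePt : Act := ⟨-1, Or.inr rfl⟩

def actMul (a b : Act) : Act :=
  ⟨(a : ℝ) * (b : ℝ), by rcases a.2 with h1 | h1 <;> rcases b.2 with h2 | h2 <;> norm_num [h1, h2]⟩

def actNeg (a : Act) : Act :=
  ⟨-(a : ℝ), by rcases a.2 with h1 | h1 <;> norm_num [h1]⟩

/-- Utility of player `i` in the SNC game on the network `(V, W)` with external field `h`. -/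
def utility {V : Type*} [Fintype V] (W : V → V → ℝ) (h : V → ℝ) (i : V) (x : V → Act) : ℝ :=
  h i * (x i : ℝ) + (x i : ℝ) * ∑ j, W i j * (x j : ℝ)

/-- Best response set of player `i` (depends only on `x_{−i}`). -/
def bestResponse {V : Type*} [Fintype V] [DecidableEq V] (W : V → V → ℝ) (h : V → ℝ)
    (i : V) (x : V → Act) : Set Act :=
  {a | ∀ b : Act, utility W h i (Function.update x i b) ≤ utility W h i (Function.update x i a)}

/-- Nash equilibrium of the SNC game. -/
def IsNash {V : Type*} [Fintype V] [DecidableEq V] (W : V → V → ℝ) (h : V → ℝ)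
    (x : V → Act) : Prop :=
  ∀ i, x i ∈ bestResponse W h i x

/-- One step of a best-response path. -/
def BRStep {V : Type*} [Fintype V] [DecidableEq V] (W : V → V → ℝ) (h : V → ℝ)
    (x y : V → Act) : Prop :=
  ∃ i, (∀ j, j ≠ i → y j = x j) ∧ y i ≠ x i ∧ y i ∈ bestResponse W h i x

def GloballyBRReachable {V : Type*} [Fintype V] [DecidableEq V] (W : V → V → ℝ) (h : V → ℝ)
    (X : Set (V → Act)) : Prop :=
  ∀ x : V → Act, ∃ y ∈ X, Relation.ReflTransGen (BRStep W h) x y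

def BRInvariant {V : Type*} [Fintype V] [DecidableEq V] (W : V → V → ℝ) (h : V → ℝ)
    (X : Set (V → Act)) : Prop :=
  ∀ x ∈ X, ∀ y, Relation.ReflTransGen (BRStep W h) x y → y ∈ X

def GloballyBRStable {V : Type*} [Fintype V] [DecidableEq V] (W : V → V → ℝ) (h : V → ℝ)
    (X : Set (V → Act)) : Prop :=
  GloballyBRReachable W h X ∧ BRInvariant W h X

/-- Structural balance of a signed weight matrix. -/
def StructurallyBalanced {V : Type*} (W : V → V → ℝ) : Prop :=
  ∃ P : Set V, (∀ i j, (i ∈ P ↔ j ∈ P) → 0 ≤ W i j) ∧ (∀ i j, ¬(i ∈ P ↔ j ∈ P) → W i j ≤ 0)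

/-- `(h^−, h^+)`-indecomposability of a network. -/
def Indecomposable {V : Type*} [Fintype V] [DecidableEq V] (W : V → V → ℝ)
    (hm hp : V → ℝ) : Prop :=
  ∀ P M : Finset V, P ∪ M = Finset.univ → Disjoint P M → P.Nonempty → M.Nonempty →
    (∃ i ∈ P, ∑ j ∈ P, |W i j| + hp i < ∑ j ∈ M, |W i j|) ∨
    (∃ i ∈ M, (∑ j ∈ M, |W i j|) - hm i < ∑ j ∈ P, |W i j|)


section Helpers

variable {V : Type*} [Fintype V] [DecidableEq V]

def drive (W : V → V → ℝ) (h : V → ℝ) (x : V → Act) (i : V) : ℝ :=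
  h i + ∑ j, W i j * (x j : ℝ)

lemma act_cases (a : Act) : a = onePt ∨ a = negOnePt := by
  rcases a.2 with h | h
  · exact Or.inl (Subtype.ext h)
  · exact Or.inr (Subtype.ext h)

lemma onePt_ne_negOnePt : onePt ≠ negOnePt := by
  intro h
  have := congrArg Subtype.val h
  norm_num [onePt, negOnePt] at this

lemma act_ne_iff {a b : Act} (hab : a ≠ b) : (b : ℝ) = -(a : ℝ) := by
  rcases a.2 with h1 | h1 <;> rcases b.2 with h2 | h2 <;>
    first
      | exact absurd (Subtype.ext (h1.trans h2.symm)) hab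
      | norm_num [h1, h2]

lemma utility_update' (W : V → V → ℝ) (h : V → ℝ) (hd : ∀ i, W i i = 0)
    (x : V → Act) (i : V) (a : Act) :
    utility W h i (Function.update x i a) = (a : ℝ) * drive W h x i := by
  unfold utility drive
  have hsum : ∑ j, W i j * ((Function.update x i a j : Act) : ℝ) = ∑ j, W i j * (x j : ℝ) := by
    refine Finset.sum_congr rfl fun j _ => ?_
    by_cases hj : j = i
    · subst hj; rw [hd j]; ring
    · simp [Function.update_of_ne hj]
  rw [hsum, Function.update_self]
  ring

lemma mem_bestResponse_iff' (W : V → V → ℝ) (h : V → ℝ) (hd : ∀ i, W i i = 0)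
    (x : V → Act) (i : V) (a : Act) :
    a ∈ bestResponse W h i x ↔ 0 ≤ (a : ℝ) * drive W h x i := by
  constructor
  · intro ha
    have h2 := ha (actNeg a)
    rw [utility_update' W h hd, utility_update' W h hd] at h2
    have h3 : ((actNeg a : Act) : ℝ) = -(a : ℝ) := rfl
    rw [h3] at h2
    linarith
  · intro h0 b
    rw [utility_update' W h hd, utility_update' W h hd]
    rcases a.2 with ha | ha <;> rcases b.2 with hb | hb <;> rw [ha] at h0 ⊢ <;> rw [hb] <;> linarith

lemma brStep_update (W : V → V → ℝ) (h : V → ℝ) (hd : ∀ i, W i i = 0)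
    (x : V → Act) (i : V) (a : Act) (hne : a ≠ x i) (h0 : 0 ≤ (a : ℝ) * drive W h x i) :
    BRStep W h x (Function.update x i a) := by
  refine ⟨i, fun j hj => Function.update_of_ne hj _ _, ?_, ?_⟩
  · rw [Function.update_self]; exact hne
  · rw [Function.update_self]; exact (mem_bestResponse_iff' W h hd x i a).2 h0

lemma drive_update (W : V → V → ℝ) (h : V → ℝ) (x : V → Act) (i j : V) (a : Act) :
    drive W h (Function.update x i a) j = drive W h x j + W j i * ((a : ℝ) - (x i : ℝ)) := by
  unfold drive
  have key : ∀ k ∈ Finset.univ, W j k * ((Function.update x i a k : Act) : ℝ) =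
      W j k * (x k : ℝ) + (if i = k then W j i * ((a : ℝ) - (x i : ℝ)) else 0) := by
    intro k _
    by_cases hk : k = i
    · subst hk; rw [Function.update_self, if_pos rfl]; ring
    · rw [Function.update_of_ne hk, if_neg (fun h : i = k => hk h.symm)]; ring
  rw [Finset.sum_congr rfl key, Finset.sum_add_distrib, Finset.sum_ite_eq]
  simp; ring

end Helpers
section Phases

variable {V : Type*} [Fintype V] [DecidableEq V]

lemma phaseA (W : V → V → ℝ) (h : V → ℝ) (hd : ∀ i, W i i = 0) (R : Finset V) :
    ∀ (n : ℕ) (x : V → Act), (R.filter (fun i => x i = onePt)).card ≤ n →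
    ∃ y, Relation.ReflTransGen (BRStep W h) x y ∧
      ∀ i ∈ R, y i = onePt → 0 < drive W h y i := by
  intro n
  induction n with
  | zero =>
    intro x hx
    refine ⟨x, Relation.ReflTransGen.refl, fun i hi hone => ?_⟩
    exfalso
    have : i ∈ R.filter (fun i => x i = onePt) := Finset.mem_filter.2 ⟨hi, hone⟩
    have := Finset.card_pos.2 ⟨i, this⟩
    omega
  | succ n ih =>
    intro x hx
    by_cases hex : ∃ i ∈ R, x i = onePt ∧ drive W h x i ≤ 0
    · obtain ⟨i, hiR, hione, hdle⟩ := hex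
      set x' := Function.update x i negOnePt with hx'
      have hne : negOnePt ≠ x i := by rw [hione]; exact fun hh => onePt_ne_negOnePt hh.symm
      have hstep : BRStep W h x x' := by
        refine brStep_update W h hd x i negOnePt hne ?_
        have : ((negOnePt : Act) : ℝ) = -1 := rfl
        rw [this]; linarith
      have hcard : (R.filter (fun j => x' j = onePt)).card ≤ n := by
        have hsub : R.filter (fun j => x' j = onePt) ⊆
            (R.filter (fun j => x j = onePt)).erase i := by
          intro j hj
          rw [Finset.mem_filter] at hj
          have hji : j ≠ i := by
            intro hji; subst hji
            rw [hx', Function.update_self] at hj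
            exact onePt_ne_negOnePt hj.2.symm
          refine Finset.mem_erase.2 ⟨hji, Finset.mem_filter.2 ⟨hj.1, ?_⟩⟩
          rw [← hj.2, hx', Function.update_of_ne hji]
        have hmem : i ∈ R.filter (fun j => x j = onePt) := Finset.mem_filter.2 ⟨hiR, hione⟩
        have := Finset.card_le_card hsub
        rw [Finset.card_erase_of_mem hmem] at this
        omega
      obtain ⟨y, hpath, hstuck⟩ := ih x' hcard
      exact ⟨y, Relation.ReflTransGen.head hstep hpath, hstuck⟩
    · push_neg at hex
      exact ⟨x, Relation.ReflTransGen.refl, hex⟩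

lemma phaseB (W : V → V → ℝ) (h : V → ℝ) (hd : ∀ i, W i i = 0) (R : Finset V)
    (hRpos : ∀ i ∈ R, ∀ j ∈ R, 0 ≤ W i j) :
    ∀ (n : ℕ) (x : V → Act), (R.filter (fun i => x i = negOnePt)).card ≤ n →
    (∀ i ∈ R, x i = onePt → 0 ≤ drive W h x i) →
    ∃ y, Relation.ReflTransGen (BRStep W h) x y ∧
      (∀ i ∈ R, x i = onePt → y i = onePt) ∧
      (∀ i ∈ R, y i = onePt → 0 ≤ drive W h y i) ∧
      (∀ i ∈ R, y i = negOnePt → drive W h y i < 0) := by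
  intro n
  induction n with
  | zero =>
    intro x hx hinv
    refine ⟨x, Relation.ReflTransGen.refl, fun i _ hh => hh, hinv, fun i hi hone => ?_⟩
    exfalso
    have : i ∈ R.filter (fun i => x i = negOnePt) := Finset.mem_filter.2 ⟨hi, hone⟩
    have := Finset.card_pos.2 ⟨i, this⟩
    omega
  | succ n ih =>
    intro x hx hinv
    by_cases hex : ∃ i ∈ R, x i = negOnePt ∧ 0 ≤ drive W h x i
    · obtain ⟨i, hiR, hione, hdle⟩ := hex
      set x' := Function.update x i onePt with hx'
      have hne : onePt ≠ x i := by rw [hione]; exact onePt_ne_negOnePt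
      have hstep : BRStep W h x x' := by
        refine brStep_update W h hd x i onePt hne ?_
        have : ((onePt : Act) : ℝ) = 1 := rfl
        rw [this]; linarith
      have hinv' : ∀ j ∈ R, x' j = onePt → 0 ≤ drive W h x' j := by
        intro j hjR hj1
        have hdu : drive W h x' j = drive W h x j + W j i * ((onePt : ℝ) - (x i : ℝ)) :=
          drive_update W h x i j onePt
        have hxi : ((x i : Act) : ℝ) = -1 := by rw [hione]; rfl
        have hone1 : ((onePt : Act) : ℝ) = 1 := rfl
        by_cases hji : j = i
        · subst hji
          rw [hdu, hd j]
          simpa using hdle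
        · have hxj : x j = onePt := by rw [← hj1, hx', Function.update_of_ne hji]
          have h1 : 0 ≤ drive W h x j := hinv j hjR hxj
          have h2 : 0 ≤ W j i := hRpos j hjR i hiR
          rw [hdu, hxi, hone1]
          nlinarith
      have hcard : (R.filter (fun j => x' j = negOnePt)).card ≤ n := by
        have hsub : R.filter (fun j => x' j = negOnePt) ⊆
            (R.filter (fun j => x j = negOnePt)).erase i := by
          intro j hj
          rw [Finset.mem_filter] at hj
          have hji : j ≠ i := by
            intro hji; subst hji
            rw [hx', Function.update_self] at hj
            exact onePt_ne_negOnePt hj.2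
          refine Finset.mem_erase.2 ⟨hji, Finset.mem_filter.2 ⟨hj.1, ?_⟩⟩
          rw [← hj.2, hx', Function.update_of_ne hji]
        have hmem : i ∈ R.filter (fun j => x j = negOnePt) := Finset.mem_filter.2 ⟨hiR, hione⟩
        have := Finset.card_le_card hsub
        rw [Finset.card_erase_of_mem hmem] at this
        omega
      obtain ⟨y, hpath, hmono, hinvy, hstuck⟩ := ih x' hcard hinv'
      refine ⟨y, Relation.ReflTransGen.head hstep hpath, ?_, hinvy, hstuck⟩
      intro j hjR hxj
      refine hmono j hjR ?_
      have hji : j ≠ i := by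
        intro hji; subst hji; exact onePt_ne_negOnePt (hxj.symm.trans hione)
      rw [hx', Function.update_of_ne hji]; exact hxj
    · push_neg at hex
      refine ⟨x, Relation.ReflTransGen.refl, fun i _ hh => hh, hinv, fun i hi hone => hex i hi hone⟩

end Phases
section Stage1

variable {V : Type*} [Fintype V] [DecidableEq V]

lemma act_abs (a : Act) : |(a : ℝ)| = 1 := by
  rcases a.2 with h | h <;> rw [h] <;> norm_num

lemma sum_subtype_filter (R : Finset V) (f : V → ℝ) (q : V → Prop) [DecidablePred q] :
    ∑ j ∈ Finset.univ.filter (fun j : {i // i ∈ R} => q j.1), f j.1 = ∑ j ∈ R.filter q, f j := by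
  classical
  rw [Finset.sum_filter, Finset.univ_eq_attach,
    Finset.sum_attach R (fun j => if q j then f j else 0), ← Finset.sum_filter]

lemma drive_split (W : V → V → ℝ) (h : V → ℝ) (R S : Finset V)
    (hUnion : R ∪ S = Finset.univ) (hDisj : Disjoint R S) (x : V → Act) (i : V) :
    drive W h x i = h i + ((∑ j ∈ R, W i j * (x j : ℝ)) + ∑ j ∈ S, W i j * (x j : ℝ)) := by
  unfold drive
  rw [← hUnion, Finset.sum_union hDisj]

lemma sum_S_bound (W : V → V → ℝ) (S : Finset V) (x : V → Act) (i : V) :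
    |∑ j ∈ S, W i j * (x j : ℝ)| ≤ ∑ j ∈ S, |W i j| := by
  refine (Finset.abs_sum_le_sum_abs _ _).trans (le_of_eq ?_)
  refine Finset.sum_congr rfl fun j _ => ?_
  rw [abs_mul, act_abs, mul_one]

lemma drive_R_decomp (W : V → V → ℝ) (h : V → ℝ) (R S : Finset V)
    (hUnion : R ∪ S = Finset.univ) (hDisj : Disjoint R S)
    (hRpos : ∀ i ∈ R, ∀ j ∈ R, 0 ≤ W i j) (x : V → Act) (i : V) (hi : i ∈ R) :
    drive W h x i = h i + ((∑ j ∈ R.filter (fun j => x j = onePt), |W i j|)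
      - ∑ j ∈ R.filter (fun j => x j = negOnePt), |W i j|)
      + ∑ j ∈ S, W i j * (x j : ℝ) := by
  rw [drive_split W h R S hUnion hDisj]
  have hsplit : (∑ j ∈ R, W i j * (x j : ℝ)) =
      (∑ j ∈ R.filter (fun j => x j = onePt), W i j * (x j : ℝ))
      + ∑ j ∈ R.filter (fun j => ¬ x j = onePt), W i j * (x j : ℝ) :=
    (Finset.sum_filter_add_sum_filter_not R _ _).symm
  have hfc : R.filter (fun j => ¬ x j = onePt) = R.filter (fun j => x j = negOnePt) := by
    refine Finset.filter_congr fun j _ => ?_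
    constructor
    · intro hn; exact (act_cases (x j)).resolve_left hn
    · intro hn he; exact onePt_ne_negOnePt (he.symm.trans hn)
  have h1 : (∑ j ∈ R.filter (fun j => x j = onePt), W i j * (x j : ℝ)) =
      ∑ j ∈ R.filter (fun j => x j = onePt), |W i j| := by
    refine Finset.sum_congr rfl fun j hj => ?_
    rw [Finset.mem_filter] at hj
    have : ((x j : Act) : ℝ) = 1 := by rw [hj.2]; rfl
    rw [this, mul_one, abs_of_nonneg (hRpos i hi j hj.1)]
  have h2 : (∑ j ∈ R.filter (fun j => x j = negOnePt), W i j * (x j : ℝ)) =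
      -∑ j ∈ R.filter (fun j => x j = negOnePt), |W i j| := by
    rw [← Finset.sum_neg_distrib]
    refine Finset.sum_congr rfl fun j hj => ?_
    rw [Finset.mem_filter] at hj
    have : ((x j : Act) : ℝ) = -1 := by rw [hj.2]; rfl
    rw [this, abs_of_nonneg (hRpos i hi j hj.1)]; ring
  rw [hsplit, hfc, h1, h2]
  ring

lemma stage1 (W : V → V → ℝ) (h : V → ℝ) (hd : ∀ i, W i i = 0)
    (R S : Finset V) (hUnion : R ∪ S = Finset.univ) (hDisj : Disjoint R S)
    (hRpos : ∀ i ∈ R, ∀ j ∈ R, 0 ≤ W i j)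
    (hind : Indecomposable (fun i j : {i // i ∈ R} => W i.1 j.1)
      (fun i : {i // i ∈ R} => h i.1 - ∑ j ∈ S, |W i.1 j|)
      (fun i : {i // i ∈ R} => h i.1 + ∑ j ∈ S, |W i.1 j|))
    (x : V → Act) :
    ∃ y, Relation.ReflTransGen (BRStep W h) x y ∧
      ((∀ i ∈ R, y i = onePt) ∨ (∀ i ∈ R, y i = negOnePt)) := by
  classical
  obtain ⟨y₁, hp1, hstuck1⟩ :=
    phaseA W h hd R (R.filter (fun i => x i = onePt)).card x le_rfl
  by_cases hPempty : ∀ i ∈ R, y₁ i = negOnePt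
  · exact ⟨y₁, hp1, Or.inr hPempty⟩
  push_neg at hPempty
  obtain ⟨i₀, hi₀R, hi₀⟩ := hPempty
  have hi₀one : y₁ i₀ = onePt := (act_cases _).resolve_right hi₀
  obtain ⟨y₂, hp2, hmono, hinv, hstuck2⟩ :=
    phaseB W h hd R hRpos (R.filter (fun i => y₁ i = negOnePt)).card y₁ le_rfl
      (fun i hi h1 => le_of_lt (hstuck1 i hi h1))
  refine ⟨y₂, hp1.trans hp2, Or.inl ?_⟩
  by_contra hM
  push_neg at hM
  obtain ⟨i₁, hi₁R, hi₁⟩ := hM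
  have hi₁neg : y₂ i₁ = negOnePt := (act_cases _).resolve_left hi₁
  set P : Finset {i // i ∈ R} := Finset.univ.filter (fun j => y₂ j.1 = onePt) with hPdef
  set M : Finset {i // i ∈ R} := Finset.univ.filter (fun j => y₂ j.1 = negOnePt) with hMdef
  have hPM : P ∪ M = Finset.univ := by
    ext j
    simp only [hPdef, hMdef, Finset.mem_union, Finset.mem_filter, Finset.mem_univ, true_and,
      iff_true]
    exact act_cases (y₂ j.1)
  have hPMdisj : Disjoint P M := by
    rw [Finset.disjoint_left]
    intro j hjP hjM
    simp only [hPdef, hMdef, Finset.mem_filter, Finset.mem_univ, true_and] at hjP hjM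
    exact onePt_ne_negOnePt (hjP.symm.trans hjM)
  have hPne : P.Nonempty := ⟨⟨i₀, hi₀R⟩, by
    simp only [hPdef, Finset.mem_filter, Finset.mem_univ, true_and]
    exact hmono i₀ hi₀R hi₀one⟩
  have hMne : M.Nonempty := ⟨⟨i₁, hi₁R⟩, by
    simp only [hMdef, Finset.mem_filter, Finset.mem_univ, true_and]
    exact hi₁neg⟩
  have hsumP : ∀ i : V, ∑ j ∈ P, |W i j.1| = ∑ j ∈ R.filter (fun j => y₂ j = onePt), |W i j| :=
    fun i => by rw [hPdef]; exact sum_subtype_filter R (fun j => |W i j|) (fun j => y₂ j = onePt)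
  have hsumM : ∀ i : V, ∑ j ∈ M, |W i j.1| = ∑ j ∈ R.filter (fun j => y₂ j = negOnePt), |W i j| :=
    fun i => by rw [hMdef]; exact sum_subtype_filter R (fun j => |W i j|) (fun j => y₂ j = negOnePt)
  rcases hind P M hPM hPMdisj hPne hMne with ⟨i, hiP, hlt⟩ | ⟨i, hiM, hlt⟩
  · simp only [hPdef, Finset.mem_filter, Finset.mem_univ, true_and] at hiP
    beta_reduce at hlt
    rw [hsumP i.1, hsumM i.1] at hlt
    have h0 : 0 ≤ drive W h y₂ i.1 := hinv i.1 i.2 hiP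
    rw [drive_R_decomp W h R S hUnion hDisj hRpos y₂ i.1 i.2] at h0
    have hb := (abs_le.1 (sum_S_bound W S y₂ i.1)).2
    linarith
  · simp only [hMdef, Finset.mem_filter, Finset.mem_univ, true_and] at hiM
    beta_reduce at hlt
    rw [hsumP i.1, hsumM i.1] at hlt
    have h0 : drive W h y₂ i.1 < 0 := hstuck2 i.1 i.2 hiM
    rw [drive_R_decomp W h R S hUnion hDisj hRpos y₂ i.1 i.2] at h0
    have hb := (abs_le.1 (sum_S_bound W S y₂ i.1)).1
    linarith

end Stage1
section Stage2

variable {V : Type*} [Fintype V] [DecidableEq V]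

def liftA (S : Finset V) (a : Act) (z : {i // i ∈ S} → Act) : V → Act :=
  fun i => if hi : i ∈ S then z ⟨i, hi⟩ else a

lemma liftA_consensus (R S : Finset V) (hDisj : Disjoint R S) (a : Act)
    (z : {i // i ∈ S} → Act) : ∀ j ∈ R, liftA S a z j = a :=
  fun j hj => dif_neg (Finset.disjoint_left.1 hDisj hj)

lemma liftA_restrict (S : Finset V) (a : Act) (z : {i // i ∈ S} → Act) :
    (fun j : {i // i ∈ S} => liftA S a z j.1) = z := by
  funext j
  unfold liftA
  rw [dif_pos j.2]

lemma liftA_eq_self (R S : Finset V) (hUnion : R ∪ S = Finset.univ) (a : Act)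
    (x : V → Act) (hx : ∀ j ∈ R, x j = a) :
    liftA S a (fun j : {i // i ∈ S} => x j.1) = x := by
  funext j
  unfold liftA
  by_cases hj : j ∈ S
  · rw [dif_pos hj]
  · rw [dif_neg hj]
    have : j ∈ R ∪ S := hUnion ▸ Finset.mem_univ j
    exact (hx j ((Finset.mem_union.1 this).resolve_right hj)).symm

lemma drive_corr (W : V → V → ℝ) (h : V → ℝ) (R S : Finset V)
    (hUnion : R ∪ S = Finset.univ) (hDisj : Disjoint R S) (a : Act)
    (x : V → Act) (hx : ∀ j ∈ R, x j = a) (i : {i // i ∈ S}) :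
    drive (fun i j : {i // i ∈ S} => W i.1 j.1)
      (fun i : {i // i ∈ S} => h i.1 + ∑ j ∈ R, W i.1 j * (a : ℝ))
      (fun j : {i // i ∈ S} => x j.1) i = drive W h x i.1 := by
  rw [drive_split W h R S hUnion hDisj]
  unfold drive
  rw [Finset.univ_eq_attach, Finset.sum_attach S (fun j => W i.1 j * ((x j : Act) : ℝ))]
  have hR : ∑ j ∈ R, W i.1 j * (a : ℝ) = ∑ j ∈ R, W i.1 j * ((x j : Act) : ℝ) :=
    Finset.sum_congr rfl fun j hj => by rw [hx j hj]
  beta_reduce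
  rw [hR]
  ring

lemma consensus_drive (W : V → V → ℝ) (h : V → ℝ) (R S : Finset V)
    (hUnion : R ∪ S = Finset.univ) (hDisj : Disjoint R S)
    (hRpos : ∀ i ∈ R, ∀ j ∈ R, 0 ≤ W i j)
    (hdeg : ∀ i ∈ R, ∑ j ∈ S, |W i j| < (∑ j ∈ R, |W i j|) - |h i|)
    (a : Act) (x : V → Act) (hx : ∀ j ∈ R, x j = a) (i : V) (hi : i ∈ R) :
    0 < (a : ℝ) * drive W h x i := by
  have h1 : ∑ j ∈ R, W i j * ((x j : Act) : ℝ) = (∑ j ∈ R, |W i j|) * (a : ℝ) := by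
    rw [Finset.sum_mul]
    exact Finset.sum_congr rfl fun j hj => by
      rw [hx j hj, abs_of_nonneg (hRpos i hi j hj)]
  have habs := abs_le.1 (sum_S_bound W S x i)
  have hdi := hdeg i hi
  have hh1 := neg_abs_le (h i)
  have hh2 := le_abs_self (h i)
  rw [drive_split W h R S hUnion hDisj, h1]
  rcases a.2 with ha | ha <;> rw [ha] <;> obtain ⟨hb1, hb2⟩ := habs <;> linarith

lemma step_consensus (W : V → V → ℝ) (h : V → ℝ) (hd : ∀ i, W i i = 0) (R S : Finset V)
    (hUnion : R ∪ S = Finset.univ) (hDisj : Disjoint R S)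
    (hRpos : ∀ i ∈ R, ∀ j ∈ R, 0 ≤ W i j)
    (hdeg : ∀ i ∈ R, ∑ j ∈ S, |W i j| < (∑ j ∈ R, |W i j|) - |h i|)
    (a : Act) (x y : V → Act) (hx : ∀ j ∈ R, x j = a) (hstep : BRStep W h x y) :
    (∀ j ∈ R, y j = a) ∧
    BRStep (fun i j : {i // i ∈ S} => W i.1 j.1)
      (fun i : {i // i ∈ S} => h i.1 + ∑ j ∈ R, W i.1 j * (a : ℝ))
      (fun j : {i // i ∈ S} => x j.1) (fun j : {i // i ∈ S} => y j.1) := by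
  obtain ⟨i, hoth, hne, hbr⟩ := hstep
  have hiS : i ∈ S := by
    by_contra hiS
    have hiR : i ∈ R := by
      have : i ∈ R ∪ S := hUnion ▸ Finset.mem_univ i
      exact (Finset.mem_union.1 this).resolve_right hiS
    have hpos := consensus_drive W h R S hUnion hDisj hRpos hdeg a x hx i hiR
    have hbr' := (mem_bestResponse_iff' W h hd x i (y i)).1 hbr
    have hxa : x i = a := hx i hiR
    have hyi : ((y i : Act) : ℝ) = -(a : ℝ) :=
      act_ne_iff (fun e => hne (e.symm.trans hxa.symm))
    rw [hyi] at hbr'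
    linarith
  constructor
  · intro j hjR
    have hji : j ≠ i := fun e => (Finset.disjoint_left.1 hDisj hjR) (e ▸ hiS)
    rw [hoth j hji]
    exact hx j hjR
  · refine ⟨⟨i, hiS⟩, ?_, hne, ?_⟩
    · intro j' hj'
      exact hoth j'.1 (fun e => hj' (Subtype.ext e))
    · rw [mem_bestResponse_iff' _ _ (fun k : {i // i ∈ S} => hd k.1),
        drive_corr W h R S hUnion hDisj a x hx ⟨i, hiS⟩]
      exact (mem_bestResponse_iff' W h hd x i (y i)).1 hbr

lemma step_lift (W : V → V → ℝ) (h : V → ℝ) (hd : ∀ i, W i i = 0) (R S : Finset V)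
    (hUnion : R ∪ S = Finset.univ) (hDisj : Disjoint R S) (a : Act)
    (z z' : {i // i ∈ S} → Act)
    (hstep : BRStep (fun i j : {i // i ∈ S} => W i.1 j.1)
      (fun i : {i // i ∈ S} => h i.1 + ∑ j ∈ R, W i.1 j * (a : ℝ)) z z') :
    BRStep W h (liftA S a z) (liftA S a z') := by
  obtain ⟨i, hoth, hne, hbr⟩ := hstep
  have hz'i : liftA S a z' i.1 = z' i := by
    unfold liftA; rw [dif_pos i.2]
  have hzi : liftA S a z i.1 = z i := by
    unfold liftA; rw [dif_pos i.2]
  refine ⟨i.1, ?_, ?_, ?_⟩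
  · intro j hj
    unfold liftA
    by_cases hjS : j ∈ S
    · rw [dif_pos hjS, dif_pos hjS, hoth ⟨j, hjS⟩ (fun e => hj (congrArg Subtype.val e))]
    · rw [dif_neg hjS, dif_neg hjS]
  · rw [hz'i, hzi]; exact hne
  · rw [hz'i, mem_bestResponse_iff' W h hd]
    have hres := (mem_bestResponse_iff' _ _ (fun k : {i // i ∈ S} => hd k.1) z i (z' i)).1 hbr
    have hdc := drive_corr W h R S hUnion hDisj a (liftA S a z)
      (liftA_consensus R S hDisj a z) i
    rw [liftA_restrict] at hdc
    rw [← hdc]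
    exact hres

lemma path_lift (W : V → V → ℝ) (h : V → ℝ) (hd : ∀ i, W i i = 0) (R S : Finset V)
    (hUnion : R ∪ S = Finset.univ) (hDisj : Disjoint R S) (a : Act)
    (z z' : {i // i ∈ S} → Act)
    (hpath : Relation.ReflTransGen (BRStep (fun i j : {i // i ∈ S} => W i.1 j.1)
      (fun i : {i // i ∈ S} => h i.1 + ∑ j ∈ R, W i.1 j * (a : ℝ))) z z') :
    Relation.ReflTransGen (BRStep W h) (liftA S a z) (liftA S a z') := by
  induction hpath with
  | refl => exact Relation.ReflTransGen.refl
  | tail _ hstep ih =>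
    exact ih.tail (step_lift W h hd R S hUnion hDisj a _ _ hstep)

lemma path_consensus (W : V → V → ℝ) (h : V → ℝ) (hd : ∀ i, W i i = 0) (R S : Finset V)
    (hUnion : R ∪ S = Finset.univ) (hDisj : Disjoint R S)
    (hRpos : ∀ i ∈ R, ∀ j ∈ R, 0 ≤ W i j)
    (hdeg : ∀ i ∈ R, ∑ j ∈ S, |W i j| < (∑ j ∈ R, |W i j|) - |h i|)
    (a : Act) (x y : V → Act) (hx : ∀ j ∈ R, x j = a)
    (hpath : Relation.ReflTransGen (BRStep W h) x y) :
    (∀ j ∈ R, y j = a) ∧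
    Relation.ReflTransGen (BRStep (fun i j : {i // i ∈ S} => W i.1 j.1)
      (fun i : {i // i ∈ S} => h i.1 + ∑ j ∈ R, W i.1 j * (a : ℝ)))
      (fun j : {i // i ∈ S} => x j.1) (fun j : {i // i ∈ S} => y j.1) := by
  induction hpath with
  | refl => exact ⟨hx, Relation.ReflTransGen.refl⟩
  | tail _ hstep ih =>
    obtain ⟨hcons, hp⟩ := ih
    obtain ⟨hcons', hstep'⟩ :=
      step_consensus W h hd R S hUnion hDisj hRpos hdeg a _ _ hcons hstep
    exact ⟨hcons', hp.tail hstep'⟩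

end Stage2

theorem stmt14 {V : Type*} [Fintype V] [DecidableEq V] [Nonempty V]
    (W : V → V → ℝ) (h : V → ℝ) (hdiag : ∀ i, W i i = 0)
    (R S : Finset V) (hUnion : R ∪ S = Finset.univ) (hDisj : Disjoint R S)
    (hRpos : ∀ i ∈ R, ∀ j ∈ R, 0 ≤ W i j)
    (hind : Indecomposable (fun i j : {i // i ∈ R} => W i.1 j.1)
      (fun i : {i // i ∈ R} => h i.1 - ∑ j ∈ S, |W i.1 j|)
      (fun i : {i // i ∈ R} => h i.1 + ∑ j ∈ S, |W i.1 j|))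
    (hdeg : ∀ i ∈ R, ∑ j ∈ S, |W i j| < (∑ j ∈ R, |W i j|) - |h i|)
    (hstab : ∀ a : Act, ∃ Nb : Set ({i // i ∈ S} → Act), Nb.Nonempty ∧
      Nb ⊆ {z : {i // i ∈ S} → Act | IsNash (fun i j : {i // i ∈ S} => W i.1 j.1)
        (fun i : {i // i ∈ S} => h i.1 + ∑ j ∈ R, W i.1 j * (a : ℝ)) z} ∧
      GloballyBRStable (fun i j : {i // i ∈ S} => W i.1 j.1)
        (fun i : {i // i ∈ S} => h i.1 + ∑ j ∈ R, W i.1 j * (a : ℝ)) Nb) :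
    ∃ Nbar : Set (V → Act), Nbar.Nonempty ∧ GloballyBRStable W h Nbar ∧
      Nbar ⊆ {x : V → Act | IsNash W h x ∧
        ((∀ i ∈ R, x i = onePt) ∨ (∀ i ∈ R, x i = negOnePt))} := by
  classical
  obtain ⟨N1, hN1ne, hN1nash, hN1reach, hN1inv⟩ := hstab onePt
  obtain ⟨N2, hN2ne, hN2nash, hN2reach, hN2inv⟩ := hstab negOnePt
  refine ⟨{x : V → Act | (∀ i ∈ R, x i = onePt) ∧ (fun j : {i // i ∈ S} => x j.1) ∈ N1}
      ∪ {x : V → Act | (∀ i ∈ R, x i = negOnePt) ∧ (fun j : {i // i ∈ S} => x j.1) ∈ N2},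
    ?_, ⟨?_, ?_⟩, ?_⟩
  · -- Nonempty
    obtain ⟨z, hz⟩ := hN1ne
    refine ⟨liftA S onePt z, Or.inl ⟨liftA_consensus R S hDisj onePt z, ?_⟩⟩
    rw [liftA_restrict]
    exact hz
  · -- reachable
    intro x
    obtain ⟨y, hpath, hcons⟩ := stage1 W h hdiag R S hUnion hDisj hRpos hind x
    rcases hcons with hcons | hcons
    · obtain ⟨z, hzN, hzpath⟩ := hN1reach (fun j : {i // i ∈ S} => y j.1)
      have hlift := path_lift W h hdiag R S hUnion hDisj onePt _ _ hzpath
      rw [liftA_eq_self R S hUnion onePt y hcons] at hlift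
      refine ⟨liftA S onePt z, Or.inl ⟨liftA_consensus R S hDisj onePt z, ?_⟩,
        hpath.trans hlift⟩
      rw [liftA_restrict]
      exact hzN
    · obtain ⟨z, hzN, hzpath⟩ := hN2reach (fun j : {i // i ∈ S} => y j.1)
      have hlift := path_lift W h hdiag R S hUnion hDisj negOnePt _ _ hzpath
      rw [liftA_eq_self R S hUnion negOnePt y hcons] at hlift
      refine ⟨liftA S negOnePt z, Or.inr ⟨liftA_consensus R S hDisj negOnePt z, ?_⟩,
        hpath.trans hlift⟩
      rw [liftA_restrict]
      exact hzN
  · -- invariant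
    rintro x (⟨hcons, hmem⟩ | ⟨hcons, hmem⟩) y hpath
    · obtain ⟨hconsy, hrespath⟩ :=
        path_consensus W h hdiag R S hUnion hDisj hRpos hdeg onePt x y hcons hpath
      exact Or.inl ⟨hconsy, hN1inv _ hmem _ hrespath⟩
    · obtain ⟨hconsy, hrespath⟩ :=
        path_consensus W h hdiag R S hUnion hDisj hRpos hdeg negOnePt x y hcons hpath
      exact Or.inr ⟨hconsy, hN2inv _ hmem _ hrespath⟩
  · -- subset of Nash with consensus
    rintro x (⟨hcons, hmem⟩ | ⟨hcons, hmem⟩)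
    · refine ⟨?_, Or.inl hcons⟩
      intro i
      by_cases hiR : i ∈ R
      · rw [mem_bestResponse_iff' W h hdiag, hcons i hiR]
        exact le_of_lt (consensus_drive W h R S hUnion hDisj hRpos hdeg onePt x hcons i hiR)
      · have hiS : i ∈ S :=
          (Finset.mem_union.1 (hUnion ▸ Finset.mem_univ i)).resolve_left hiR
        have := hN1nash hmem ⟨i, hiS⟩
        rw [mem_bestResponse_iff' _ _ (fun k : {i // i ∈ S} => hdiag k.1),
          drive_corr W h R S hUnion hDisj onePt x hcons ⟨i, hiS⟩] at this
        rw [mem_bestResponse_iff' W h hdiag]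
        exact this
    · refine ⟨?_, Or.inr hcons⟩
      intro i
      by_cases hiR : i ∈ R
      · rw [mem_bestResponse_iff' W h hdiag, hcons i hiR]
        exact le_of_lt (consensus_drive W h R S hUnion hDisj hRpos hdeg negOnePt x hcons i hiR)
      · have hiS : i ∈ S :=
          (Finset.mem_union.1 (hUnion ▸ Finset.mem_univ i)).resolve_left hiR
        have := hN2nash hmem ⟨i, hiS⟩
        rw [mem_bestResponse_iff' _ _ (fun k : {i // i ∈ S} => hdiag k.1),
          drive_corr W h R S hUnion hDisj negOnePt x hcons ⟨i, hiS⟩] at this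
        rw [mem_bestResponse_iff' W h hdiag]
        exact this
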